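/- For pairwise distinct points A, B, C on an elliptic curve E over K, Γ(-A,-B,-C) = -Γ(A,B,C) - a₁, and Γ is invariant under simultaneous translation: Γ(A+P, B+P, C+P) = Γ(A,B,C) for any point P. -/

import Mathlib

/-! Negation acts on affine coordinates by `y ↦ -y - a₁x - a₃`, which turns a line of slope `λ`
into one of slope `-λ - a₁`; and `Γ(A,B,C)` depends only on `C - A` and `A - B`, which a common
translation leaves unchanged. -/

noncomputable section
namespace EllipticPeriods

variable {F : Type*} [Field F]

/-- x-coordinate of an affine point, with junk value 0 at the point at infinity. -/
def xc {W : WeierstrassCurve.Affine F} : W.Point → F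
  | .zero => 0
  | @WeierstrassCurve.Affine.Point.some _ _ _ x _ _ => x

/-- y-coordinate of an affine point, with junk value 0 at the point at infinity. -/
def yc {W : WeierstrassCurve.Affine F} : W.Point → F
  | .zero => 0
  | @WeierstrassCurve.Affine.Point.some _ _ _ _ y _ => y

open scoped Classical in
/-- The function `u_{A,B} = (y_A - y(A-B))/(x_A - x(A-B))`, evaluated at `P`: this is the
slope of the line (secant, or tangent in the degenerate case) through the points
`P - A` and `A - B` of the curve. -/
def uf (W : WeierstrassCurve.Affine F) (A B P : W.Point) : F :=
  W.slope (xc (P - A)) (xc (A - B)) (yc (P - A)) (yc (A - B))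

/-- `Γ(A,B,C) = u_{A,B}(C)`. -/
def Gam (W : WeierstrassCurve.Affine F) (A B C : W.Point) : F := uf W A B C

open WeierstrassCurve.Affine

section slope

variable {W : WeierstrassCurve.Affine F} [DecidableEq F]

lemma slope_negY_of_X_ne {x₁ x₂ : F} (y₁ y₂ : F) (hx : x₁ ≠ x₂) :
    W.slope x₁ x₂ (W.negY x₁ y₁) (W.negY x₂ y₂) = -W.slope x₁ x₂ y₁ y₂ - W.a₁ := by
  have hx' : x₁ - x₂ ≠ 0 := sub_ne_zero.mpr hx
  rw [slope_of_X_ne hx, slope_of_X_ne hx, negY, negY]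
  field_simp
  ring

lemma slope_negY_self {x y : F} (hy : y ≠ W.negY x y) :
    W.slope x x (W.negY x y) (W.negY x y) = -W.slope x x y y - W.a₁ := by
  have hy' : W.negY x y ≠ W.negY x (W.negY x y) := by
    rw [negY_negY]
    exact hy.symm
  have hd : y - W.negY x y ≠ 0 := sub_ne_zero.mpr hy
  rw [slope_of_Y_ne rfl hy', slope_of_Y_ne rfl hy, negY_negY, ← neg_sub y (W.negY x y), div_neg]
  field_simp
  ring

lemma slope_negY {x₁ x₂ y₁ y₂ : F} (h₁ : W.Equation x₁ y₁) (h₂ : W.Equation x₂ y₂)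
    (hne : ¬(x₁ = x₂ ∧ y₁ = W.negY x₂ y₂)) :
    W.slope x₁ x₂ (W.negY x₁ y₁) (W.negY x₂ y₂) = -W.slope x₁ x₂ y₁ y₂ - W.a₁ := by
  by_cases hx : x₁ = x₂
  · have hy : y₁ ≠ W.negY x₂ y₂ := fun hy => hne ⟨hx, hy⟩
    obtain rfl := hx
    obtain rfl := Y_eq_of_Y_ne h₁ h₂ rfl hy
    exact slope_negY_self hy
  · exact slope_negY_of_X_ne y₁ y₂ hx

lemma slope_neg {P Q : W.Point} (hP : P ≠ 0) (hQ : Q ≠ 0) (hPQ : P ≠ -Q) :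
    W.slope (xc (-P)) (xc (-Q)) (yc (-P)) (yc (-Q)) =
      -W.slope (xc P) (xc Q) (yc P) (yc Q) - W.a₁ := by
  rcases P with _ | @⟨x₁, y₁, h₁⟩
  · exact absurd rfl hP
  rcases Q with _ | @⟨x₂, y₂, h₂⟩
  · exact absurd rfl hQ
  simp only [Point.neg_some, xc, yc] at hPQ ⊢
  refine slope_negY h₁.1 h₂.1 ?_
  rintro ⟨rfl, rfl⟩
  exact hPQ rfl

end slope

open scoped Classical in
lemma uf_neg {W : WeierstrassCurve.Affine F} {A B C : W.Point}
    (hAB : A ≠ B) (hBC : B ≠ C) (hAC : A ≠ C) :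
    uf W (-A) (-B) (-C) = -uf W A B C - W.a₁ := by
  have hCB : C - A ≠ -(A - B) := by
    rw [neg_sub, ne_eq, sub_left_inj]
    exact hBC.symm
  rw [uf, uf, ← neg_sub', ← neg_sub']
  exact slope_neg (sub_ne_zero.mpr hAC.symm) (sub_ne_zero.mpr hAB) hCB

open scoped Classical in
lemma uf_add_right (W : WeierstrassCurve.Affine F) (A B C P : W.Point) :
    uf W (A + P) (B + P) (C + P) = uf W A B C := by
  simp only [uf, add_sub_add_right_eq_sub]

open scoped Classical in
/-- `Γ(-A,-B,-C) = -Γ(A,B,C) - a₁`, and `Γ` is invariant under simultaneous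
translation of its three arguments. -/
theorem Gamma_neg_and_translate {F : Type*} [Field F] (W : WeierstrassCurve.Affine F)
    (A B C : W.Point) (hAB : A ≠ B) (hBC : B ≠ C) (hAC : A ≠ C) :
    Gam W (-A) (-B) (-C) = -Gam W A B C - W.a₁ ∧
      ∀ P : W.Point, Gam W (A + P) (B + P) (C + P) = Gam W A B C :=
  ⟨uf_neg hAB hBC hAC, uf_add_right W A B C⟩

end EllipticPeriods
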